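/- Let n ≥ 1, let x : Fin n → ℝ with |x s| ≤ 1 for every s, and let ρ ∈ ℝ with |ρ| < 1. Then ∑_{k=0}^{∞} ρ^k · ∏_{s} T_k(x s) ≥ 0. -/

import Mathlib

/-!
With `x s = cos θ s` we have `T_k (x s) = cos (k θ s)`, and the product formula for cosines turns
`∏ s, cos (k θ s)` into the average over subsets `t` of `cos (k φ t)`, where
`φ t = ∑ s ∈ t, θ s - ∑ s ∉ t, θ s`. So the series is an average of the series
`∑ ρ^k cos (k φ) = Re (1 - ρ e^{iφ})⁻¹`, and each of these is nonnegative
because `Re (1 - z) ≥ 0` for `‖z‖ ≤ 1`.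
-/

open Polynomial Finset Real

theorem Complex.re_inv_one_sub_nonneg {z : ℂ} (hz : ‖z‖ ≤ 1) : 0 ≤ (1 - z)⁻¹.re := by
  rw [Complex.inv_re]
  refine div_nonneg ?_ (Complex.normSq_nonneg _)
  rw [Complex.sub_re, Complex.one_re, sub_nonneg]
  exact (Complex.re_le_norm z).trans hz

theorem Real.hasSum_pow_mul_cos {ρ : ℝ} (hρ : |ρ| < 1) (φ : ℝ) :
    HasSum (fun k : ℕ => ρ ^ k * cos (k * φ)) (1 - ρ * Complex.exp (φ * Complex.I))⁻¹.re := by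
  have hz : ‖(ρ : ℂ) * Complex.exp (φ * Complex.I)‖ < 1 := by
    simpa [Complex.norm_exp_ofReal_mul_I] using hρ
  convert Complex.hasSum_re (hasSum_geometric_of_norm_lt_one hz) using 2 with k
  rw [mul_pow, ← Complex.exp_nat_mul, ← mul_assoc, ← Complex.ofReal_pow]
  norm_cast
  rw [Complex.re_ofReal_mul, Complex.exp_ofReal_mul_I_re]

theorem Finset.prod_cos_eq_sum_powerset {ι : Type*} [DecidableEq ι] (s : Finset ι) (θ : ι → ℝ) :
    ∏ i ∈ s, cos (θ i) =
      (∑ t ∈ s.powerset, cos (∑ i ∈ t, θ i - ∑ i ∈ s \ t, θ i)) / 2 ^ s.card := by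
  induction s using Finset.induction_on with
  | empty => simp
  | insert a s ha ih =>
    have pair : ∀ t ∈ s.powerset,
        cos (∑ i ∈ t, θ i - ∑ i ∈ insert a s \ t, θ i) +
          cos (∑ i ∈ insert a t, θ i - ∑ i ∈ insert a s \ insert a t, θ i) =
        2 * cos (θ a) * cos (∑ i ∈ t, θ i - ∑ i ∈ s \ t, θ i) := by
      intro t ht
      have hat : a ∉ t := fun h => ha (mem_powerset.1 ht h)
      rw [insert_sdiff_of_notMem _ hat, insert_sdiff_insert, sdiff_insert_of_notMem ha,
        sum_insert (fun h => ha (mem_sdiff.1 h).1), sum_insert hat]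
      set φ := ∑ i ∈ t, θ i - ∑ i ∈ s \ t, θ i
      rw [show ∑ i ∈ t, θ i - (θ a + ∑ i ∈ s \ t, θ i) = φ - θ a by ring,
        show θ a + ∑ i ∈ t, θ i - ∑ i ∈ s \ t, θ i = φ + θ a by ring, cos_sub, cos_add]
      ring
    rw [prod_insert ha, ih, sum_powerset_insert ha, ← sum_add_distrib, sum_congr rfl pair,
      ← mul_sum, card_insert_of_notMem ha, pow_succ]
    field_simp

theorem Polynomial.Chebyshev.T_real_eval_eq_cos_mul_arccos {x : ℝ} (hx : |x| ≤ 1) (k : ℤ) :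
    (T ℝ k).eval x = cos (k * arccos x) := by
  rw [← T_real_cos, cos_arccos (abs_le.1 hx).1 (abs_le.1 hx).2]

theorem chebyshev_T_gen_fun_nonneg_general (n : ℕ) (x : Fin n → ℝ)
    (hx : ∀ s, |x s| ≤ 1) (ρ : ℝ) (hρ : |ρ| < 1) :
    0 ≤ ∑' k : ℕ, ρ ^ k * ∏ s, (Chebyshev.T ℝ (k : ℤ)).eval (x s) := by
  set φ : Finset (Fin n) → ℝ := fun t => ∑ s ∈ t, arccos (x s) - ∑ s ∈ univ \ t, arccos (x s)
  have hterm : ∀ k : ℕ, ρ ^ k * ∏ s, (Chebyshev.T ℝ (k : ℤ)).eval (x s) =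
      ∑ t ∈ univ.powerset, ρ ^ k * cos (k * φ t) / 2 ^ n := by
    intro k
    simp_rw [Chebyshev.T_real_eval_eq_cos_mul_arccos (hx _), Int.cast_natCast,
      prod_cos_eq_sum_powerset, φ, sum_div, mul_sub, mul_sum, card_univ, Fintype.card_fin,
      mul_div_assoc]
  have hsum := hasSum_sum fun t (_ : t ∈ (univ : Finset (Fin n)).powerset) =>
    (hasSum_pow_mul_cos hρ (φ t)).div_const (2 ^ n)
  rw [tsum_congr hterm, hsum.tsum_eq]
  exact sum_nonneg fun t _ =>
    div_nonneg (Complex.re_inv_one_sub_nonneg (by simpa using hρ.le)) (by positivity)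

theorem chebyshev_T_gen_fun_nonneg (n : ℕ) (hn : 1 ≤ n) (x : Fin n → ℝ)
    (hx : ∀ s, |x s| ≤ 1) (ρ : ℝ) (hρ : |ρ| < 1) :
    0 ≤ ∑' k : ℕ, ρ ^ k * ∏ s, (Chebyshev.T ℝ (k : ℤ)).eval (x s) :=
  chebyshev_T_gen_fun_nonneg_general n x hx ρ hρ
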